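/- Let ρ₀ ∈ (0, π) and let γ be a closed curve on S² with radius of curvature ρ(t) ∈ (0, ρ₀) for all t. Define B : [0,1] × [ρ₀ − π, 0] → S² by B(t,θ) = cos θ · γ(t) + sin θ · n(t). Then: (a) ∂B/∂θ(t,θ) = −sin θ · γ(t) + cos θ · n(t) has norm 1; (b) ∂B/∂t(t,θ) = (|γ'(t)| sin(ρ(t) − θ)/sin ρ(t)) · t(t), which is nonzero and orthogonal to ∂B/∂θ(t,θ), and det(B(t,θ), ∂B/∂t(t,θ), ∂B/∂θ(t,θ)) > 0; in particular the derivative of B is an isomorphism at every point. (c) The map C : [0,1] × [0,ρ₀] → S² given by the same formula fails to be an immersion exactly at the points (t, ρ(t)). -/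

import Mathlib

noncomputable section

open Real Set Filter
open scoped RealInnerProductSpace

abbrev E3 := EuclideanSpace ℝ (Fin 3)

/-- The cross product on `ℝ³`. -/
def cross3 (u v : E3) : E3 :=
  (WithLp.equiv 2 (Fin 3 → ℝ)).symm
    ![u 1 * v 2 - u 2 * v 1, u 2 * v 0 - u 0 * v 2, u 0 * v 1 - u 1 * v 0]

/-- Unit tangent vector of a curve. -/
def unitTan (γ : ℝ → E3) (t : ℝ) : E3 := ‖deriv γ t‖⁻¹ • deriv γ t

/-- Unit normal vector of a spherical curve. -/
def unitNor (γ : ℝ → E3) (t : ℝ) : E3 := cross3 (γ t) (unitTan γ t)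

/-- Geodesic curvature of a spherical curve. -/
def geodCurv (γ : ℝ → E3) (t : ℝ) : ℝ :=
  ⟪deriv (unitTan γ) t, unitNor γ t⟫ / ‖deriv γ t‖

/-- Radius of curvature: `arccot` of the geodesic curvature, valued in `(0, π)`. -/
def radCurv (γ : ℝ → E3) (t : ℝ) : ℝ := π / 2 - arctan (geodCurv γ t)

/-- A closed curve on the sphere `S²`: a `C²`, 1-periodic, regular map into the unit sphere. -/
def IsClosedCurve (γ : ℝ → E3) : Prop :=
  ContDiff ℝ 2 γ ∧ Function.Periodic γ 1 ∧ ∀ t, ‖γ t‖ = 1 ∧ deriv γ t ≠ 0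

/-- Homotopy of closed spherical curves through closed curves whose radius
of curvature takes values in `(ρ₂, ρ₁)`. -/
def HomotopicIn (ρ₂ ρ₁ : ℝ) (γ₀ γ₁ : ℝ → E3) : Prop :=
  ∃ H : ℝ → ℝ → E3,
    H 0 = γ₀ ∧ H 1 = γ₁ ∧
    (∀ s ∈ Icc (0:ℝ) 1, IsClosedCurve (H s) ∧ ∀ t, radCurv (H s) t ∈ Ioo ρ₂ ρ₁) ∧
    ContinuousOn (fun p : ℝ × ℝ => H p.1 p.2) (Icc 0 1 ×ˢ univ) ∧
    ContinuousOn (fun p : ℝ × ℝ => deriv (H p.1) p.2) (Icc 0 1 ×ˢ univ) ∧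
    ContinuousOn (fun p : ℝ × ℝ => deriv (deriv (H p.1)) p.2) (Icc 0 1 ×ˢ univ)

/-- `σ` is a circle traversed `k` times with radius of curvature `α`. -/
def IsCircleTraversed (k : ℕ) (α : ℝ) (σ : ℝ → E3) : Prop :=
  α ∈ Ioo (0:ℝ) π ∧
  ∃ R : Matrix (Fin 3) (Fin 3) ℝ, R.transpose * R = 1 ∧ R.det = 1 ∧
    ∀ t, σ t = (WithLp.equiv 2 (Fin 3 → ℝ)).symm
      (R.mulVec ![sin α * cos (2 * π * k * t), sin α * sin (2 * π * k * t), cos α])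

/-- Caustic band / translation formula. -/
def caustic (γ : ℝ → E3) (t θ : ℝ) : E3 :=
  Real.cos θ • γ t + Real.sin θ • unitNor γ t

/-! Along a spherical curve, `(γ, t, n)` with `n = γ × t` is an orthonormal frame, and the
spherical Frenet equation `n' = -|γ'| κ t` (from `t' ⊥ t` and `⟪t', n⟫ = |γ'| κ`) gives
`∂B/∂t = |γ'| (cos θ - κ sin θ) t = |γ'| sin (ρ - θ) / sin ρ · t`, because `cot ρ = κ`.
`∂B/∂θ` is `B` turned by a quarter turn in the plane of `γ` and `n`, hence a unit vector
orthogonal to `t`, and `B × t = ∂B/∂θ` makes `det (B, ∂B/∂t, ∂B/∂θ)` the coefficient of `∂B/∂t`.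
Everything thus hinges on `sin (ρ - θ)`: positive for `θ ∈ [ρ₀ - π, 0]`, and zero for
`θ ∈ [0, ρ₀]` only at `θ = ρ`. -/

open Matrix
open scoped InnerProductSpace

section CrossProduct

lemma cross3_eq_crossProduct (u v : E3) :
    cross3 u v = WithLp.toLp 2 (WithLp.ofLp u ⨯₃ WithLp.ofLp v) := by
  ext i; fin_cases i <;> simp [cross3, cross_apply]

lemma E3.inner_eq_dotProduct (u v : E3) : ⟪u, v⟫ = WithLp.ofLp u ⬝ᵥ WithLp.ofLp v := by
  simp [EuclideanSpace.inner_eq_star_dotProduct, dotProduct_comm]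

def cross3Bilin : E3 →ₗ[ℝ] E3 →ₗ[ℝ] E3 :=
  (crossProduct.compl₁₂ (WithLp.linearEquiv 2 ℝ (Fin 3 → ℝ)).toLinearMap
    (WithLp.linearEquiv 2 ℝ (Fin 3 → ℝ)).toLinearMap).compr₂
    (WithLp.linearEquiv 2 ℝ (Fin 3 → ℝ)).symm.toLinearMap

lemma cross3Bilin_apply (u v : E3) : cross3Bilin u v = cross3 u v := by
  rw [cross3_eq_crossProduct]; rfl

lemma cross3_add_left (u v w : E3) : cross3 (u + v) w = cross3 u w + cross3 v w := by
  simp only [← cross3Bilin_apply, map_add, LinearMap.add_apply]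

lemma cross3_smul_left (a : ℝ) (u v : E3) : cross3 (a • u) v = a • cross3 u v := by
  simp only [← cross3Bilin_apply, map_smul, LinearMap.smul_apply]

lemma cross3_add_right (u v w : E3) : cross3 u (v + w) = cross3 u v + cross3 u w := by
  simp only [← cross3Bilin_apply, map_add]

lemma cross3_smul_right (a : ℝ) (u v : E3) : cross3 u (a • v) = a • cross3 u v := by
  simp only [← cross3Bilin_apply, map_smul]

lemma cross3_self (u : E3) : cross3 u u = 0 := by
  simp [cross3_eq_crossProduct]

lemma inner_self_cross3 (u v : E3) : ⟪u, cross3 u v⟫ = 0 := by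
  simp [E3.inner_eq_dotProduct, cross3_eq_crossProduct]

lemma inner_cross3_self (u v : E3) : ⟪v, cross3 u v⟫ = 0 := by
  simp [E3.inner_eq_dotProduct, cross3_eq_crossProduct]

lemma cross3_cross3_eq_smul_sub_smul' (u v w : E3) :
    cross3 u (cross3 v w) = ⟪u, w⟫ • v - ⟪v, u⟫ • w := by
  simp [E3.inner_eq_dotProduct, cross3_eq_crossProduct, cross_cross_eq_smul_sub_smul']

lemma cross3_cross3_eq_smul_sub_smul (u v w : E3) :
    cross3 (cross3 u v) w = ⟪u, w⟫ • v - ⟪v, w⟫ • u := by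
  simp [E3.inner_eq_dotProduct, cross3_eq_crossProduct, cross_cross_eq_smul_sub_smul]

lemma inner_cross3_cross3 (u v w x : E3) :
    ⟪cross3 u v, cross3 w x⟫ = ⟪u, w⟫ * ⟪v, x⟫ - ⟪u, x⟫ * ⟪v, w⟫ := by
  simp [E3.inner_eq_dotProduct, cross3_eq_crossProduct, cross_dot_cross]

lemma det_of_cols_eq_inner_cross3 (u v w : E3) :
    (Matrix.of fun i j => ![u, v, w] j i).det = ⟪cross3 u v, w⟫ := by
  have hrows : (Matrix.of fun i j => ![u, v, w] j i)ᵀ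
      = ![WithLp.ofLp u, WithLp.ofLp v, WithLp.ofLp w] := by
    ext i j; fin_cases i <;> rfl
  rw [← det_transpose, hrows, ← triple_product_eq_det, triple_product_permutation,
    triple_product_permutation, E3.inner_eq_dotProduct, cross3_eq_crossProduct,
    dotProduct_comm]

lemma hasDerivAt_cross3 {f g : ℝ → E3} {f' g' : E3} {t : ℝ}
    (hf : HasDerivAt f f' t) (hg : HasDerivAt g g' t) :
    HasDerivAt (fun s => cross3 (f s) (g s)) (cross3 (f t) g' + cross3 f' (g t)) t := by
  simpa [LinearMap.toContinuousBilinearMap, cross3Bilin_apply] using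
    cross3Bilin.toContinuousBilinearMap.hasDerivAt_of_bilinear (fun _ => hf) (fun _ => hg)

end CrossProduct

section InnerProductSpace

variable {𝕜 F : Type*} [RCLike 𝕜] [NormedAddCommGroup F] [InnerProductSpace 𝕜 F]

lemma Orthonormal.sum_inner_smul_eq [FiniteDimensional 𝕜 F] {ι : Type*} [Fintype ι]
    {e : ι → F} (he : Orthonormal 𝕜 e) (hcard : Fintype.card ι = Module.finrank 𝕜 F) (x : F) :
    ∑ i, ⟪e i, x⟫_𝕜 • e i = x := by
  simpa using (OrthonormalBasis.mk he
    (he.linearIndependent.span_eq_top_of_card_eq_finrank' hcard).ge).sum_repr' x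

lemma linearIndependent_pair_iff_of_inner_eq_zero {u w : F} (hw : w ≠ 0)
    (h : ⟪u, w⟫_𝕜 = 0) :
    LinearIndependent 𝕜 ![u, w] ↔ u ≠ 0 := by
  refine ⟨fun hli => by simpa using hli.ne_zero 0, fun hu => ?_⟩
  refine linearIndependent_of_ne_zero_of_inner_eq_zero (fun i => ?_) fun i j hij => ?_
  · fin_cases i <;> simpa
  · fin_cases i <;> fin_cases j <;> simp_all [inner_eq_zero_symm]

end InnerProductSpace

lemma HasDerivAt.inner_eq_zero_of_norm_const {F : Type*} [NormedAddCommGroup F]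
    [InnerProductSpace ℝ F] {f : ℝ → F} {f' : F} {t c : ℝ} (hf : HasDerivAt f f' t)
    (hc : ∀ s, ‖f s‖ = c) : ⟪f t, f'⟫ = 0 := by
  have h := hf.norm_sq
  simp only [hc] at h
  simpa using h.unique (hasDerivAt_const t (c ^ 2))

lemma norm_smul_add_smul_of_orthonormal {F : Type*} [NormedAddCommGroup F]
    [InnerProductSpace ℝ F] {u w : F} (hu : ‖u‖ = 1) (hw : ‖w‖ = 1) (huw : ⟪u, w⟫ = 0)
    {a b : ℝ} (hab : a ^ 2 + b ^ 2 = 1) : ‖a • u + b • w‖ = 1 := by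
  have hsq : ‖a • u + b • w‖ ^ 2 = 1 := by
    rw [norm_add_sq_real, norm_smul, norm_smul, real_inner_smul_left, real_inner_smul_right,
      huw, hu, hw, Real.norm_eq_abs, Real.norm_eq_abs]
    nlinarith [sq_abs a, sq_abs b]
  exact (pow_eq_one_iff_of_nonneg (norm_nonneg _) two_ne_zero).mp hsq

lemma orthonormal_cross3 {u w : E3} (hu : ‖u‖ = 1) (hw : ‖w‖ = 1) (huw : ⟪u, w⟫ = 0) :
    Orthonormal ℝ ![u, w, cross3 u w] := by
  have hn : ‖cross3 u w‖ = 1 := by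
    refine (pow_eq_one_iff_of_nonneg (norm_nonneg _) two_ne_zero).mp ?_
    rw [← real_inner_self_eq_norm_sq, inner_cross3_cross3, real_inner_self_eq_norm_sq,
      real_inner_self_eq_norm_sq, hu, hw, huw]
    norm_num
  rw [orthonormal_iff_ite]
  intro i j
  fin_cases i <;> fin_cases j <;>
    simp [hu, hw, huw, hn, inner_self_cross3, inner_cross3_self, real_inner_comm]

lemma cross3_self_cross3 {u w : E3} (hu : ‖u‖ = 1) (huw : ⟪u, w⟫ = 0) :
    cross3 u (cross3 u w) = -w := by
  rw [cross3_cross3_eq_smul_sub_smul', huw, real_inner_self_eq_norm_sq, hu]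
  simp

lemma cross3_cross3_self {u w : E3} (hw : ‖w‖ = 1) (huw : ⟪u, w⟫ = 0) :
    cross3 (cross3 u w) w = -u := by
  rw [cross3_cross3_eq_smul_sub_smul, huw, real_inner_self_eq_norm_sq, hw]
  simp

lemma cross3_cos_smul_add_sin_smul {u w : E3} (hw : ‖w‖ = 1) (huw : ⟪u, w⟫ = 0) (θ : ℝ) :
    cross3 (cos θ • u + sin θ • cross3 u w) w = (-sin θ) • u + cos θ • cross3 u w := by
  rw [cross3_add_left, cross3_smul_left, cross3_smul_left, cross3_cross3_self hw huw]
  module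

section SphericalCurve

variable {γ : ℝ → E3} {t : ℝ}

lemma norm_unitTan (h : deriv γ t ≠ 0) : ‖unitTan γ t‖ = 1 :=
  norm_smul_inv_norm h

lemma deriv_eq_norm_smul_unitTan (h : deriv γ t ≠ 0) :
    deriv γ t = ‖deriv γ t‖ • unitTan γ t := by
  rw [unitTan, smul_smul, mul_inv_cancel₀ (norm_ne_zero_iff.mpr h), one_smul]

lemma inner_unitTan_eq_zero (hS : ∀ s, ‖γ s‖ = 1) (hd : DifferentiableAt ℝ γ t) :
    ⟪γ t, unitTan γ t⟫ = 0 := by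
  rw [unitTan, real_inner_smul_right, hd.hasDerivAt.inner_eq_zero_of_norm_const hS, mul_zero]

lemma orthonormal_frame (hS : ∀ s, ‖γ s‖ = 1) (hd : DifferentiableAt ℝ γ t)
    (h : deriv γ t ≠ 0) : Orthonormal ℝ ![γ t, unitTan γ t, unitNor γ t] :=
  orthonormal_cross3 (hS t) (norm_unitTan h) (inner_unitTan_eq_zero hS hd)

lemma norm_deriv_caustic_angle (hS : ∀ s, ‖γ s‖ = 1) (hd : DifferentiableAt ℝ γ t)
    (h : deriv γ t ≠ 0) (θ : ℝ) : ‖(-sin θ) • γ t + cos θ • unitNor γ t‖ = 1 :=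
  have hframe := orthonormal_frame hS hd h
  norm_smul_add_smul_of_orthonormal (hS t) (hframe.1 2) (inner_self_cross3 _ _)
    (by rw [neg_sq, sin_sq_add_cos_sq])

lemma inner_unitTan_deriv_caustic_angle (hS : ∀ s, ‖γ s‖ = 1) (hd : DifferentiableAt ℝ γ t)
    (θ : ℝ) : ⟪unitTan γ t, (-sin θ) • γ t + cos θ • unitNor γ t⟫ = 0 := by
  rw [inner_add_right, real_inner_smul_right, real_inner_smul_right, real_inner_comm,
    inner_unitTan_eq_zero hS hd, unitNor, inner_cross3_self]
  ring

lemma cross3_caustic_unitTan (hS : ∀ s, ‖γ s‖ = 1) (hd : DifferentiableAt ℝ γ t)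
    (h : deriv γ t ≠ 0) (θ : ℝ) :
    cross3 (caustic γ t θ) (unitTan γ t) = (-sin θ) • γ t + cos θ • unitNor γ t :=
  cross3_cos_smul_add_sin_smul (norm_unitTan h) (inner_unitTan_eq_zero hS hd) θ

end SphericalCurve

lemma hasDerivAt_unitNor {γ : ℝ → E3} (hγ : ContDiff ℝ 2 γ) (hS : ∀ s, ‖γ s‖ = 1)
    (hreg : ∀ s, deriv γ s ≠ 0) (t : ℝ) :
    HasDerivAt (unitNor γ) (-(‖deriv γ t‖ * geodCurv γ t) • unitTan γ t) t := by
  have hd : Differentiable ℝ γ := hγ.differentiable (by norm_num)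
  have hd' : Differentiable ℝ (deriv γ) := hγ.differentiable_deriv_two
  have hT : HasDerivAt (unitTan γ) (deriv (unitTan γ) t) t :=
    ((((hd' t).norm ℝ (hreg t)).inv (norm_ne_zero_iff.mpr (hreg t))).smul (hd' t)).hasDerivAt
  set T' := deriv (unitTan γ) t
  have hTT' : ⟪unitTan γ t, T'⟫ = 0 :=
    hT.inner_eq_zero_of_norm_const fun s => norm_unitTan (hreg s)
  have hnT' : ⟪unitNor γ t, T'⟫ = ‖deriv γ t‖ * geodCurv γ t := by
    rw [geodCurv, real_inner_comm, mul_div_cancel₀ _ (norm_ne_zero_iff.mpr (hreg t))]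
  -- `γ × T'` only sees the `n`-component of `T'`, since `γ × γ = 0` and `⟪T, T'⟫ = 0`.
  have hexp := (orthonormal_frame hS (hd t) (hreg t)).sum_inner_smul_eq (by simp) T'
  simp only [Fin.sum_univ_three, Matrix.cons_val_zero, Matrix.cons_val_one,
    Matrix.cons_val_two, Matrix.head_cons, Matrix.tail_cons] at hexp
  have hγT' : cross3 (γ t) T' = -(‖deriv γ t‖ * geodCurv γ t) • unitTan γ t := by
    rw [← hexp, cross3_add_right, cross3_add_right, cross3_smul_right, cross3_smul_right,
      cross3_smul_right, cross3_self, hTT', hnT', unitNor,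
      cross3_self_cross3 (hS t) (inner_unitTan_eq_zero hS (hd t))]
    module
  have hγ'T : cross3 (deriv γ t) (unitTan γ t) = 0 := by
    rw [deriv_eq_norm_smul_unitTan (hreg t), cross3_smul_left, cross3_self, smul_zero]
  have hn : HasDerivAt (unitNor γ) _ t := hasDerivAt_cross3 (hd t).hasDerivAt hT
  rwa [hγT', hγ'T, add_zero] at hn

lemma sin_sub_div_sin {ρ κ : ℝ} (hs : sin ρ ≠ 0) (hc : cos ρ = κ * sin ρ) (θ : ℝ) :
    sin (ρ - θ) / sin ρ = cos θ - κ * sin θ := by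
  rw [sin_sub, hc]
  field_simp

lemma sin_radCurv_pos (γ : ℝ → E3) (t : ℝ) : 0 < sin (radCurv γ t) := by
  rw [radCurv, sin_pi_div_two_sub, cos_arctan]
  positivity

lemma cos_radCurv (γ : ℝ → E3) (t : ℝ) :
    cos (radCurv γ t) = geodCurv γ t * sin (radCurv γ t) := by
  rw [radCurv, cos_pi_div_two_sub, sin_pi_div_two_sub, sin_arctan, cos_arctan, mul_one_div]

lemma hasDerivAt_caustic_angle (γ : ℝ → E3) (t θ : ℝ) :
    HasDerivAt (fun θ' => caustic γ t θ') ((-sin θ) • γ t + cos θ • unitNor γ t) θ :=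
  ((hasDerivAt_cos θ).smul_const (γ t)).add ((hasDerivAt_sin θ).smul_const (unitNor γ t))

lemma hasDerivAt_caustic_param {γ : ℝ → E3} (hγ : ContDiff ℝ 2 γ) (hS : ∀ s, ‖γ s‖ = 1)
    (hreg : ∀ s, deriv γ s ≠ 0) (t θ : ℝ) :
    HasDerivAt (fun t' => caustic γ t' θ)
      ((‖deriv γ t‖ * sin (radCurv γ t - θ) / sin (radCurv γ t)) • unitTan γ t) t := by
  have h : HasDerivAt (fun t' => caustic γ t' θ) (cos θ • deriv γ t
      + sin θ • (-(‖deriv γ t‖ * geodCurv γ t)) • unitTan γ t) t :=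
    ((hγ.differentiable (by norm_num) t).hasDerivAt.const_smul (cos θ)).add
      ((hasDerivAt_unitNor hγ hS hreg t).const_smul (sin θ))
  convert h using 1
  rw [mul_div_assoc, sin_sub_div_sin (sin_radCurv_pos γ t).ne' (cos_radCurv γ t),
    deriv_eq_norm_smul_unitTan (hreg t), norm_smul, norm_norm, norm_unitTan (hreg t), mul_one]
  module

/-- Properties of the regular band `B(t,θ) = cos θ · γ(t) + sin θ · n(t)`
for `θ ∈ [ρ₀ − π, 0]`, and the locus where the caustic band (the same formula with
`θ ∈ [0, ρ₀]`) fails to be an immersion. -/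
theorem band_properties (ρ₀ : ℝ) (hρ₀ : ρ₀ ∈ Ioo 0 π) (γ : ℝ → E3)
    (hγ : IsClosedCurve γ) (hrad : ∀ t, radCurv γ t ∈ Ioo 0 ρ₀) :
    (∀ t, ∀ θ ∈ Icc (ρ₀ - π) 0,
      -- (a)
      deriv (fun θ' => caustic γ t θ') θ
          = (-Real.sin θ) • γ t + Real.cos θ • unitNor γ t ∧
      ‖deriv (fun θ' => caustic γ t θ') θ‖ = 1 ∧
      -- (b)
      deriv (fun t' => caustic γ t' θ) t
          = (‖deriv γ t‖ * Real.sin (radCurv γ t - θ) / Real.sin (radCurv γ t))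
              • unitTan γ t ∧
      deriv (fun t' => caustic γ t' θ) t ≠ 0 ∧
      ⟪deriv (fun t' => caustic γ t' θ) t, deriv (fun θ' => caustic γ t θ') θ⟫ = 0 ∧
      0 < Matrix.det (Matrix.of fun i j =>
          ![caustic γ t θ, deriv (fun t' => caustic γ t' θ) t,
            deriv (fun θ' => caustic γ t θ') θ] j i)) ∧
    -- (c)
    (∀ t, ∀ θ ∈ Icc (0:ℝ) ρ₀,
      (¬ LinearIndependent ℝ
          ![deriv (fun t' => caustic γ t' θ) t, deriv (fun θ' => caustic γ t θ') θ])
        ↔ θ = radCurv γ t) := by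
  obtain ⟨hsm, -, hcurve⟩ := hγ
  have hS : ∀ s, ‖γ s‖ = 1 := fun s => (hcurve s).1
  have hreg : ∀ s, deriv γ s ≠ 0 := fun s => (hcurve s).2
  have hd : Differentiable ℝ γ := hsm.differentiable (by norm_num)
  have hθ := fun t θ => (hasDerivAt_caustic_angle γ t θ).deriv
  have ht := fun t θ => (hasDerivAt_caustic_param hsm hS hreg t θ).deriv
  have hT : ∀ t, unitTan γ t ≠ 0 := fun t =>
    ne_zero_of_norm_ne_zero (by simp [norm_unitTan (hreg t)])
  have hBθ := fun t => norm_deriv_caustic_angle hS (hd t) (hreg t)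
  have hTBθ : ∀ t θ,
      ⟪deriv (fun t' => caustic γ t' θ) t, deriv (fun θ' => caustic γ t θ') θ⟫ = 0 := fun t θ => by
    rw [hθ, ht, real_inner_smul_left, inner_unitTan_deriv_caustic_angle hS (hd t), mul_zero]
  refine ⟨fun t θ hθI => ?_, fun t θ hθI => ?_⟩
  · have hc : 0 < ‖deriv γ t‖ * sin (radCurv γ t - θ) / sin (radCurv γ t) :=
      div_pos (mul_pos (norm_pos_iff.mpr (hreg t)) (sin_pos_of_pos_of_lt_pi
        (by linarith [(hrad t).1, hθI.2]) (by linarith [(hrad t).2, hθI.1])))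
        (sin_radCurv_pos γ t)
    refine ⟨hθ t θ, hθ t θ ▸ hBθ t θ, ht t θ, ht t θ ▸ smul_ne_zero hc.ne' (hT t), hTBθ t θ, ?_⟩
    rwa [det_of_cols_eq_inner_cross3, hθ, ht, cross3_smul_right,
      cross3_caustic_unitTan hS (hd t) (hreg t), real_inner_smul_left,
      real_inner_self_eq_norm_sq, hBθ, one_pow, mul_one]
  · rw [linearIndependent_pair_iff_of_inner_eq_zero
      (ne_zero_of_norm_ne_zero (by rw [hθ, hBθ]; exact one_ne_zero)) (hTBθ t θ),
      not_not, ht, smul_eq_zero, or_iff_left (hT t), div_eq_zero_iff,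
      or_iff_left (sin_radCurv_pos γ t).ne', mul_eq_zero,
      or_iff_right (norm_ne_zero_iff.mpr (hreg t)),
      sin_eq_zero_iff_of_lt_of_lt (by linarith [(hrad t).1, hθI.2, hρ₀.2])
        (by linarith [(hrad t).2, hθI.1, hρ₀.2]), sub_eq_zero, eq_comm]
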